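/- Fix an increasing price function P. All zone tariffs without double counting with respect to P satisfy the no-stopover property if and only if P(k) ≤ P(i) + P(k−i+1) for all k ≥ 1 and i ∈ {1,...,k}. -/

import Mathlib

open scoped Classical

/-- A path in a graph given by adjacency relation `adj`: a nonempty list of
consecutively adjacent nodes. -/
def IsPath {V : Type*} (adj : V → V → Prop) (W : List V) : Prop :=
  W ≠ [] ∧ W.Chain' adj

/-- An `x`-`y`-path. -/
def IsXYPath {V : Type*} (adj : V → V → Prop) (x y : V) (W : List V) : Prop :=
  IsPath adj W ∧ W.head? = some x ∧ W.getLast? = some y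

/-- `W` decomposes as the concatenation `W₁ + W₂` (the last node of `W₁` is the
first node of `W₂`). -/
def Splits {V : Type*} (W W₁ W₂ : List V) : Prop :=
  W₁ ≠ [] ∧ W₂ ≠ [] ∧ W₁.getLast? = W₂.head? ∧ W = W₁ ++ W₂.tail

/-- `W` splits at an intermediate node into `W₁ + W₂` (both parts have at least
two nodes). -/
def SplitsAt {V : Type*} (W W₁ W₂ : List V) : Prop :=
  2 ≤ W₁.length ∧ 2 ≤ W₂.length ∧ W₁.getLast? = W₂.head? ∧ W = W₁ ++ W₂.tail

/-- The no-stopover property: splitting a path at an intermediate node never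
decreases the total price. -/
def NoStopover {V : Type*} (adj : V → V → Prop) (p : List V → ℝ) : Prop :=
  ∀ W W₁ W₂ : List V, IsPath adj W → IsPath adj W₁ → IsPath adj W₂ →
    SplitsAt W W₁ W₂ → p W ≤ p W₁ + p W₂

/-- The no-elongation property: removing the last node of a path never
increases the price. -/
def NoElongation {V : Type*} (adj : V → V → Prop) (p : List V → ℝ) : Prop :=
  ∀ W : List V, IsPath adj W → 2 ≤ W.length → p W.dropLast ≤ p W

/-- Number of distinct zones visited by a path (zone tariff without double
counting). -/
noncomputable def distinctZones {V Z : Type*} (zone : V → Z) (W : List V) : ℕ :=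
  (zone '' { v | v ∈ W }).ncard


/-!
Splitting a path at a node `v` yields two parts that both visit the zone of `v`, so the zone counts
satisfy `z̄(W) + 1 ≤ z̄(W₁) + z̄(W₂)`; monotonicity of `P` and the inequality with
`k = z̄(W₁) + z̄(W₂) - 1` then give no-stopover. Conversely, a path through `k` consecutive zones,
split inside the `i`-th one, has parts visiting `i` and `k - i + 1` zones.
-/

section ZoneTariff

variable {V Z : Type*} (zone : V → Z)

theorem distinctZones_eq_card_image (W : List V) :
    distinctZones zone W = (W.toFinset.image zone).card := by
  rw [distinctZones, ← Set.ncard_coe_finset, Finset.coe_image, List.coe_toFinset]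

theorem one_le_distinctZones {W : List V} (hW : W ≠ []) : 1 ≤ distinctZones zone W := by
  rw [distinctZones_eq_card_image, Nat.one_le_iff_ne_zero, Ne, Finset.card_eq_zero,
    Finset.image_eq_empty, List.toFinset_eq_empty_iff]
  exact hW

theorem distinctZones_add_one_le {W W₁ W₂ : List V} (h : Splits W W₁ W₂) :
    distinctZones zone W + 1 ≤ distinctZones zone W₁ + distinctZones zone W₂ := by
  obtain ⟨h₁, -, hlast, rfl⟩ := h
  simp only [distinctZones_eq_card_image]
  set A := W₁.toFinset.image zone
  set B := W₂.toFinset.image zone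
  have hsub : (W₁ ++ W₂.tail).toFinset.image zone ⊆ A ∪ B := by
    rw [List.toFinset_append, Finset.image_union]
    exact Finset.union_subset_union le_rfl
      (Finset.image_subset_image fun v hv => List.mem_toFinset.2 <|
        List.mem_of_mem_tail (List.mem_toFinset.1 hv))
  have hshared : (A ∩ B).Nonempty := by
    obtain ⟨v, hv⟩ := Option.ne_none_iff_exists'.1 (mt List.getLast?_eq_none_iff.1 h₁)
    refine ⟨zone v, Finset.mem_inter.2 ⟨?_, ?_⟩⟩
    · exact Finset.mem_image_of_mem _ (List.mem_toFinset.2 (List.mem_of_getLast? hv))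
    · exact Finset.mem_image_of_mem _ (List.mem_toFinset.2 (List.mem_of_mem_head? (hlast ▸ hv)))
  have := Finset.card_le_card hsub
  have := Finset.card_union_add_card_inter A B
  have := hshared.card_pos
  omega

theorem SplitsAt.splits {W W₁ W₂ : List V} (h : SplitsAt W W₁ W₂) : Splits W W₁ W₂ := by
  obtain ⟨h₁, h₂, hlast, hW⟩ := h
  exact ⟨List.ne_nil_of_length_pos (by omega), List.ne_nil_of_length_pos (by omega), hlast, hW⟩

theorem noStopover_distinctZones (adj : V → V → Prop) {P : ℕ → ℝ}
    (hmono : ∀ k l : ℕ, 1 ≤ k → k ≤ l → P k ≤ P l)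
    (hP : ∀ k i : ℕ, 1 ≤ k → 1 ≤ i → i ≤ k → P k ≤ P i + P (k - i + 1)) :
    NoStopover adj (fun W => P (distinctZones zone W)) := by
  intro W W₁ W₂ hW _ _ hsplitAt
  have hsplit := hsplitAt.splits
  have hc := one_le_distinctZones zone hW.1
  have ha := one_le_distinctZones zone hsplit.1
  have hb := one_le_distinctZones zone hsplit.2.1
  have hcab := distinctZones_add_one_le zone hsplit
  set a := distinctZones zone W₁
  set b := distinctZones zone W₂
  calc P (distinctZones zone W) ≤ P (a + b - 1) := hmono _ _ hc (by omega)
    _ ≤ P a + P (a + b - 1 - a + 1) := hP _ _ (by omega) ha (by omega)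
    _ = P a + P b := by rw [show a + b - 1 - a + 1 = b by omega]

end ZoneTariff

theorem distinctZones_div_three_range' (m : ℕ) {n : ℕ} (hn : n ≠ 0) :
    distinctZones (· / 3) (List.range' m n) = (m + n - 1) / 3 + 1 - m / 3 := by
  rw [distinctZones_eq_card_image, ← Nat.card_Ico]
  congr 1
  ext x
  simp only [Finset.mem_image, List.mem_toFinset, List.mem_range'_1, Finset.mem_Ico]
  constructor
  · rintro ⟨v, hv, rfl⟩
    omega
  · intro hx
    exact ⟨max m (3 * x), by omega, by omega⟩

theorem isPath_range' (m : ℕ) {n : ℕ} (hn : n ≠ 0) :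
    IsPath (fun u v : ℕ => v = u + 1) (List.range' m n) :=
  ⟨by simpa using hn, List.isChain_range' m n 1⟩

/-- The path `0, 1, …, 3k - 1` crosses `k` zones of three nodes each and is split at the middle node
of zone `i - 1`; three nodes per zone keep two nodes in each part also for `i = 1` and `i = k`. -/
theorem le_add_of_noStopover_lineOfZones {P : ℕ → ℝ}
    (h : NoStopover (fun u v : ℕ => v = u + 1) (fun W => P (distinctZones (· / 3) W)))
    {k i : ℕ} (hi : 1 ≤ i) (hik : i ≤ k) : P k ≤ P i + P (k - i + 1) := by
  have hsplit : SplitsAt (List.range' 0 (3 * k)) (List.range' 0 (3 * i - 1))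
      (List.range' (3 * i - 2) (3 * k - 3 * i + 2)) := by
    refine ⟨by rw [List.length_range']; omega, by rw [List.length_range']; omega, ?_, ?_⟩
    · rw [List.getLast?_range', List.head?_range', if_neg (by omega), if_neg (by omega)]
      congr 1
      omega
    · rw [List.tail_range', show 3 * i - 2 + 1 = 0 + (3 * i - 1) by omega, List.range'_append_1]
      congr 1
      omega
  have := h _ _ _ (isPath_range' _ (by omega)) (isPath_range' _ (by omega))
    (isPath_range' _ (by omega)) hsplit
  simp only [distinctZones_div_three_range' _ (show 3 * k ≠ 0 by omega),
    distinctZones_div_three_range' _ (show 3 * i - 1 ≠ 0 by omega),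
    distinctZones_div_three_range' _ (show 3 * k - 3 * i + 2 ≠ 0 by omega)] at this
  convert this using 3 <;> omega

/-- Fix an increasing price function `P`. All zone tariffs without double
counting w.r.t. `P` satisfy the no-stopover property if and only if
`P(k) ≤ P(i) + P(k−i+1)` for all `k ≥ 1` and `i ∈ {1,…,k}`. -/
theorem no_double_counting_no_stopover_iff (P : ℕ → ℝ)
    (hmono : ∀ k l : ℕ, 1 ≤ k → k ≤ l → P k ≤ P l) :
    (∀ (V Z : Type) (adj : V → V → Prop) (zone : V → Z),
        NoStopover adj (fun W => P (distinctZones zone W))) ↔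
      (∀ k i : ℕ, 1 ≤ k → 1 ≤ i → i ≤ k → P k ≤ P i + P (k - i + 1)) :=
  ⟨fun h _ _ _ hi hik => le_add_of_noStopover_lineOfZones (h ℕ ℕ _ _) hi hik,
    fun hP _ _ adj zone => noStopover_distinctZones zone adj hmono hP⟩
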